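/- arXiv:1401.2651 — 4 statements merged into one kernel-verified Lean document; each statement's English description precedes it below -/
import Mathlib

section
/- Schema Theorem (Holland). Consider one generation of a genetic algorithm with fitness-proportional selection, one-point crossover applied with probability p_c ∈ [0,1], and independent per-bit mutation with probability p_m ∈ [0,1], on bit strings of length ℓ ≥ 2. Each of the n offspring of generation t+1 is generated independently as follows: select two parents independently by fitness-proportional selection; with probability p_c choose a cut point k uniformly from {1,…,ℓ−1} and let the offspring take its bits at positions < k from the first parent and its bits at positions ≥ k from the second parent, and with probability 1−p_c let the offspring be a copy of the first parent; finally, independently flip each bit of the offspring with probability p_m. Then for every schema H with at least one fixed position and m(H,t) ≥ 1, the expected number m(H,t+1) of offspring matching H satisfies E(m(H,t+1)) ≥ (f(H,t)/f̄(t)) · m(H,t) · (1 − p_c·d(H)/(ℓ−1)) · (1 − p_m)^{o(H)}. -/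
/-- A bit string `A : Fin ℓ → Bool` matches (is an instance of) a schema
`H : Fin ℓ → Option Bool` if it agrees with `H` on every fixed position. -/
def SchemaMatches {ℓ : ℕ} (A : Fin ℓ → Bool) (H : Fin ℓ → Option Bool) : Prop :=
  ∀ i : Fin ℓ, ∀ b : Bool, H i = some b → A i = b

instance {ℓ : ℕ} (A : Fin ℓ → Bool) (H : Fin ℓ → Option Bool) :
    Decidable (SchemaMatches A H) :=
  inferInstanceAs (Decidable (∀ i : Fin ℓ, ∀ b : Bool, H i = some b → A i = b))

/-- The fixed positions of a schema: indices where `H` is not `∗`. -/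
def fixedPos {ℓ : ℕ} (H : Fin ℓ → Option Bool) : Finset (Fin ℓ) :=
  Finset.univ.filter (fun i => H i ≠ none)

/-- The order `o(H)`: the number of fixed positions. -/
def schemaOrder {ℓ : ℕ} (H : Fin ℓ → Option Bool) : ℕ := (fixedPos H).card

/-- The defining length `d(H)`: distance between the last and first fixed positions. -/
def defLength {ℓ : ℕ} (H : Fin ℓ → Option Bool) (h : (fixedPos H).Nonempty) : ℕ :=
  ((fixedPos H).max' h : ℕ) - ((fixedPos H).min' h : ℕ)
/-- Total fitness of the population. -/
def totalFit {ℓ n : ℕ} (P : Fin n → Fin ℓ → Bool) (f : (Fin ℓ → Bool) → ℝ) : ℝ :=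
  ∑ j, f (P j)

/-- Fitness-proportional selection probability of individual `j`. -/
noncomputable def selProb {ℓ n : ℕ} (P : Fin n → Fin ℓ → Bool)
    (f : (Fin ℓ → Bool) → ℝ) (j : Fin n) : ℝ :=
  f (P j) / totalFit P f

/-- The set of population members matching the schema `H`. -/
def matchSet {ℓ n : ℕ} (P : Fin n → Fin ℓ → Bool) (H : Fin ℓ → Option Bool) :
    Finset (Fin n) :=
  Finset.univ.filter (fun j => SchemaMatches (P j) H)

/-- `m(H,t)`: the number of population members matching `H`. -/
def mCount {ℓ n : ℕ} (P : Fin n → Fin ℓ → Bool) (H : Fin ℓ → Option Bool) : ℕ :=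
  (matchSet P H).card

/-- `f(H,t)`: the average fitness of the population members matching `H`
(`0` by convention if there are none, since `0/0 = 0` in Lean). -/
noncomputable def schemaFit {ℓ n : ℕ} (P : Fin n → Fin ℓ → Bool)
    (f : (Fin ℓ → Bool) → ℝ) (H : Fin ℓ → Option Bool) : ℝ :=
  (∑ j ∈ matchSet P H, f (P j)) / (mCount P H : ℝ)

/-- `f̄(t)`: the mean fitness of the population. -/
noncomputable def meanFit {ℓ n : ℕ} (P : Fin n → Fin ℓ → Bool)
    (f : (Fin ℓ → Bool) → ℝ) : ℝ :=
  totalFit P f / (n : ℝ)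

/-- `p(H,t)`: the probability that a fitness-proportionally selected individual
matches `H`. -/
noncomputable def pSel {ℓ n : ℕ} (P : Fin n → Fin ℓ → Bool)
    (f : (Fin ℓ → Bool) → ℝ) (H : Fin ℓ → Option Bool) : ℝ :=
  ∑ j ∈ matchSet P H, selProb P f j
/-- Apply a mutation mask `e` to a string `A`: the bit at `i` is flipped iff `e i = true`. -/
def mutate {ℓ : ℕ} (A e : Fin ℓ → Bool) : Fin ℓ → Bool :=
  fun i => Bool.xor (A i) (e i)

/-- The probability of the mutation mask `e` under independent per-bit mutation
with probability `p_m`. -/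
def mutWeight {ℓ : ℕ} (p_m : ℝ) (e : Fin ℓ → Bool) : ℝ :=
  ∏ i, if e i then p_m else 1 - p_m
/-- The random choices used to create one offspring: two parent indices, an optional
crossover cut (`some k` meaning the cut point `k+1 ∈ {1,…,ℓ-1}`, `none` meaning no
crossover), and a mutation mask. -/
abbrev GAChoice (ℓ n : ℕ) : Type :=
  Fin n × Fin n × Option (Fin (ℓ - 1)) × (Fin ℓ → Bool)

/-- The probability of an elementary choice: the parents are selected independently by
fitness-proportional selection, crossover happens with probability `p_c` with a cut point
uniform in `{1,…,ℓ-1}`, and the mutation mask has its independent per-bit probability. -/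
noncomputable def gaWeight {ℓ n : ℕ} (P : Fin n → Fin ℓ → Bool)
    (f : (Fin ℓ → Bool) → ℝ) (p_c p_m : ℝ) (x : GAChoice ℓ n) : ℝ :=
  selProb P f x.1 * selProb P f x.2.1 *
    (match x.2.2.1 with
      | none => 1 - p_c
      | some _ => p_c / ((ℓ : ℝ) - 1)) *
    mutWeight p_m x.2.2.2

/-- The offspring produced by an elementary choice: with no crossover, a copy of the
first parent; with a cut at `k = x.2.2.1+1`, the bits at positions `< k` come from the
first parent and those at positions `≥ k` from the second; finally the mutation mask
is applied. -/
def gaOffspring {ℓ n : ℕ} (P : Fin n → Fin ℓ → Bool) (x : GAChoice ℓ n) :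
    Fin ℓ → Bool :=
  mutate
    (match x.2.2.1 with
      | none => P x.1
      | some k => fun i => if (i : ℕ) < (k : ℕ) + 1 then P x.1 i else P x.2.1 i)
    x.2.2.2

/-- The probability that a single newly created offspring matches `H`. -/
noncomputable def matchProb {ℓ n : ℕ} (P : Fin n → Fin ℓ → Bool)
    (f : (Fin ℓ → Bool) → ℝ) (p_c p_m : ℝ) (H : Fin ℓ → Option Bool) : ℝ :=
  ∑ x : GAChoice ℓ n,
    gaWeight P f p_c p_m x * (if SchemaMatches (gaOffspring P x) H then 1 else 0)

/-- `E(m(H,t+1))`: the expected number of offspring matching `H` when the `n` offspring of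
generation `t+1` are created independently, computed over the product space of all the
random choices. -/
noncomputable def expCount {ℓ n : ℕ} (P : Fin n → Fin ℓ → Bool)
    (f : (Fin ℓ → Bool) → ℝ) (p_c p_m : ℝ) (H : Fin ℓ → Option Bool) : ℝ :=
  ∑ ω : Fin n → GAChoice ℓ n,
    (∏ i, gaWeight P f p_c p_m (ω i)) *
      ((Finset.univ.filter (fun i : Fin n => SchemaMatches (gaOffspring P (ω i)) H)).card : ℝ)

/-! By linearity of expectation, `E(m(H,t+1))` is `n` times the probability that one offspring
matches `H`. That event contains the intersection of two independent events: the crossover child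
of the selected parents matches `H`, and mutation leaves every fixed position of `H` untouched,
which has probability `(1 - p_m)^o(H)`. The crossover child matches `H` if there is no crossover
and the first parent does, or if the cut avoids the span of `H` and the parent that supplies
all fixed positions matches. At most `d(H)` of the `ℓ - 1` cuts fall inside the span, so the
crossover child matches with probability at least `p(H,t) (1 - p_c d(H)/(ℓ - 1))`, where
`p(H,t) = f(H,t) m(H,t) / (n f̄(t))` is the probability of selecting an instance of `H`. -/

open Finset

lemma sum_prod_mul_apply {ι κ R : Type*} [Fintype ι] [DecidableEq ι] [Fintype κ]
    [CommSemiring R] {w : κ → R} (hw : ∑ x, w x = 1) (g : κ → R) (i : ι) :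
    ∑ ω : ι → κ, (∏ j, w (ω j)) * g (ω i) = ∑ x, w x * g x := by
  have hsplit : ∀ ω : ι → κ,
      (∏ j, w (ω j)) * g (ω i) = ∏ j, w (ω j) * if j = i then g (ω j) else 1 := by
    intro ω
    rw [prod_mul_distrib, Fintype.prod_ite_eq']
  have hfactor : ∀ j, (∑ x, w x * if j = i then g x else 1) =
      if j = i then ∑ x, w x * g x else 1 := by
    intro j
    split_ifs <;> simp [hw]
  rw [sum_congr rfl fun ω _ => hsplit ω,
    ← Fintype.prod_sum fun j x => w x * if j = i then g x else 1, Fintype.prod_congr _ _ hfactor,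
    Fintype.prod_ite_eq']

lemma boole_le_boole {p q : Prop} [Decidable p] [Decidable q] (h : p → q) :
    (if p then 1 else 0 : ℝ) ≤ if q then 1 else 0 := by
  split_ifs <;> simp_all

lemma card_filter_mem_Ico_le (m a b : ℕ) :
    #(univ.filter fun k : Fin m => a ≤ k ∧ (k : ℕ) < b) ≤ b - a :=
  calc _ ≤ #(Ico a b) :=
        card_le_card_of_injOn Fin.val (fun k hk => by simpa using hk) Fin.val_injective.injOn
    _ = b - a := Nat.card_Ico a b

section Selection

variable {ℓ n : ℕ} {P : Fin n → Fin ℓ → Bool} {f : (Fin ℓ → Bool) → ℝ}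

lemma totalFit_pos (hf : ∀ j, 0 < f (P j)) (hn : 0 < n) : 0 < totalFit P f :=
  sum_pos (fun j _ => hf j) ⟨⟨0, hn⟩, mem_univ _⟩

lemma selProb_nonneg (hf : ∀ j, 0 < f (P j)) (j : Fin n) : 0 ≤ selProb P f j :=
  div_nonneg (hf j).le (sum_nonneg fun i _ => (hf i).le)

lemma sum_selProb (hT : totalFit P f ≠ 0) : ∑ j, selProb P f j = 1 := by
  simp only [selProb, ← sum_div]
  exact div_self hT

lemma pSel_eq_sum_ite (H : Fin ℓ → Option Bool) :
    pSel P f H = ∑ j, selProb P f j * if SchemaMatches (P j) H then 1 else 0 := by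
  simp only [pSel, matchSet, sum_filter, mul_boole]

lemma pSel_nonneg (hf : ∀ j, 0 < f (P j)) (H : Fin ℓ → Option Bool) : 0 ≤ pSel P f H :=
  sum_nonneg fun j _ => selProb_nonneg hf j

lemma schemaFit_mul_mCount (H : Fin ℓ → Option Bool) :
    schemaFit P f H * mCount P H = ∑ j ∈ matchSet P H, f (P j) :=
  div_mul_cancel_of_imp fun h => by
    rw [mCount, Nat.cast_eq_zero, card_eq_zero] at h
    rw [h, sum_empty]

lemma schemaFit_div_meanFit_mul_mCount (H : Fin ℓ → Option Bool) :
    schemaFit P f H / meanFit P f * mCount P H = n * pSel P f H := by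
  rw [div_mul_eq_mul_div, schemaFit_mul_mCount, meanFit, pSel, div_div_eq_mul_div]
  simp only [selProb, ← sum_div]
  ring

end Selection

section Mutation

variable {ℓ : ℕ} {p_m : ℝ}

lemma mutWeight_nonneg (hpm : p_m ∈ Set.Icc (0 : ℝ) 1) (e : Fin ℓ → Bool) :
    0 ≤ mutWeight p_m e :=
  prod_nonneg fun i _ => by split <;> linarith [hpm.1, hpm.2]

lemma sum_mutWeight_mul_avoids (s : Finset (Fin ℓ)) (p_m : ℝ) :
    ∑ e, mutWeight p_m e * (if ∀ i ∈ s, e i = false then 1 else 0) = (1 - p_m) ^ s.card := by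
  set g : Fin ℓ → Bool → ℝ := fun i b => if b then (if i ∈ s then 0 else p_m) else 1 - p_m
  have factor : ∀ e : Fin ℓ → Bool,
      mutWeight p_m e * (if ∀ i ∈ s, e i = false then 1 else 0) = ∏ i, g i (e i) := by
    intro e
    by_cases he : ∀ i ∈ s, e i = false
    · rw [if_pos he, mul_one, mutWeight]
      refine prod_congr rfl fun i _ => ?_
      by_cases hi : i ∈ s <;> simp [g, hi, he i]
    · obtain ⟨i, hi, hei⟩ : ∃ i ∈ s, e i = true := by simpa using he
      rw [if_neg he, mul_zero, eq_comm]
      exact prod_eq_zero (mem_univ i) (by simp [g, hi, hei])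
  rw [sum_congr rfl fun e _ => factor e, ← Fintype.prod_sum]
  simp only [g, Fintype.sum_bool, if_true, ite_add, zero_add, add_sub_cancel,
    Bool.false_eq_true, if_false, Fintype.prod_ite_mem, prod_const]

lemma sum_mutWeight (p_m : ℝ) : ∑ e : Fin ℓ → Bool, mutWeight p_m e = 1 := by
  simpa using sum_mutWeight_mul_avoids (∅ : Finset (Fin ℓ)) p_m

lemma mutate_matches {H : Fin ℓ → Option Bool} {A e : Fin ℓ → Bool}
    (hA : SchemaMatches A H) (he : ∀ i ∈ fixedPos H, e i = false) :
    SchemaMatches (mutate A e) H := by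
  intro i b hb
  simp [mutate, he i (by simp [fixedPos, hb]), hA i b hb]

end Mutation

section Crossover

variable {ℓ n : ℕ}

def crossover (A B : Fin ℓ → Bool) : Option (Fin (ℓ - 1)) → Fin ℓ → Bool
  | none => A
  | some k => fun i => if (i : ℕ) < (k : ℕ) + 1 then A i else B i

noncomputable def crossWeight (ℓ : ℕ) (p_c : ℝ) : Option (Fin (ℓ - 1)) → ℝ
  | none => 1 - p_c
  | some _ => p_c / ((ℓ : ℝ) - 1)

lemma gaOffspring_eq (P : Fin n → Fin ℓ → Bool) (x : GAChoice ℓ n) :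
    gaOffspring P x = mutate (crossover (P x.1) (P x.2.1) x.2.2.1) x.2.2.2 := by
  obtain ⟨_, _, _ | _, _⟩ := x <;> rfl

lemma gaWeight_eq (P : Fin n → Fin ℓ → Bool) (f : (Fin ℓ → Bool) → ℝ) (p_c p_m : ℝ)
    (x : GAChoice ℓ n) :
    gaWeight P f p_c p_m x =
      selProb P f x.1 * selProb P f x.2.1 * crossWeight ℓ p_c x.2.2.1 * mutWeight p_m x.2.2.2 := by
  obtain ⟨_, _, _ | _, _⟩ := x <;> rfl

lemma crossWeight_nonneg {p_c : ℝ} (hpc : p_c ∈ Set.Icc (0 : ℝ) 1) :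
    ∀ c : Option (Fin (ℓ - 1)), 0 ≤ crossWeight ℓ p_c c
  | none => sub_nonneg.2 hpc.2
  | some k => div_nonneg hpc.1 (by
      have : (1 : ℝ) ≤ ℓ := by exact_mod_cast (by have := k.isLt; omega : 1 ≤ ℓ)
      linarith)

lemma sum_crossWeight (hℓ : 2 ≤ ℓ) (p_c : ℝ) : ∑ c, crossWeight ℓ p_c c = 1 := by
  have hcast : ((ℓ - 1 : ℕ) : ℝ) = (ℓ : ℝ) - 1 := by
    push_cast [Nat.cast_sub (by omega : 1 ≤ ℓ)]
    ring
  have hpos : (ℓ : ℝ) - 1 ≠ 0 := by rw [← hcast]; exact_mod_cast (by omega : ℓ - 1 ≠ 0)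
  simp only [Fintype.sum_option, crossWeight, sum_const, card_univ, Fintype.card_fin, nsmul_eq_mul,
    hcast]
  field_simp
  ring

variable {H : Fin ℓ → Option Bool} (hfix : (fixedPos H).Nonempty) {A B : Fin ℓ → Bool}
  {k : Fin (ℓ - 1)}
include hfix

lemma crossover_matches_of_max_le (hA : SchemaMatches A H)
    (hk : (((fixedPos H).max' hfix : Fin ℓ) : ℕ) ≤ k) :
    SchemaMatches (crossover A B (some k)) H := by
  intro i b hb
  have : i ≤ (fixedPos H).max' hfix := le_max' _ i (by simp [fixedPos, hb])
  dsimp only [crossover]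
  rw [if_pos (by omega)]
  exact hA i b hb

lemma crossover_matches_of_lt_min (hB : SchemaMatches B H)
    (hk : (k : ℕ) < (((fixedPos H).min' hfix : Fin ℓ) : ℕ)) :
    SchemaMatches (crossover A B (some k)) H := by
  intro i b hb
  have : (fixedPos H).min' hfix ≤ i := min'_le _ i (by simp [fixedPos, hb])
  dsimp only [crossover]
  rw [if_neg (by omega)]
  exact hB i b hb

end Crossover

section ExpectedCount

variable {ℓ n : ℕ} {P : Fin n → Fin ℓ → Bool} {f : (Fin ℓ → Bool) → ℝ} {p_c p_m : ℝ}

lemma gaWeight_nonneg (hf : ∀ j, 0 < f (P j)) (hpc : p_c ∈ Set.Icc (0 : ℝ) 1)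
    (hpm : p_m ∈ Set.Icc (0 : ℝ) 1) (x : GAChoice ℓ n) : 0 ≤ gaWeight P f p_c p_m x := by
  rw [gaWeight_eq]
  have := selProb_nonneg hf x.1
  have := selProb_nonneg hf x.2.1
  have := crossWeight_nonneg hpc x.2.2.1
  have := mutWeight_nonneg hpm x.2.2.2
  positivity

lemma sum_gaWeight (hℓ : 2 ≤ ℓ) (hT : totalFit P f ≠ 0) :
    ∑ x : GAChoice ℓ n, gaWeight P f p_c p_m x = 1 := by
  simp only [gaWeight_eq, Fintype.sum_prod_type, ← mul_sum, sum_selProb hT,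
    sum_crossWeight hℓ, sum_mutWeight, mul_one]

lemma expCount_eq_mul_matchProb (hℓ : 2 ≤ ℓ) (hf : ∀ j, 0 < f (P j)) (H : Fin ℓ → Option Bool) :
    expCount P f p_c p_m H = n * matchProb P f p_c p_m H := by
  have hmarginal : ∀ i : Fin n, ∑ ω : Fin n → GAChoice ℓ n, (∏ j, gaWeight P f p_c p_m (ω j)) *
      (if SchemaMatches (gaOffspring P (ω i)) H then 1 else 0) = matchProb P f p_c p_m H :=
    fun i => sum_prod_mul_apply (sum_gaWeight hℓ (totalFit_pos hf i.pos).ne')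
      (fun x => if SchemaMatches (gaOffspring P x) H then 1 else 0) i
  simp only [expCount, natCast_card_filter, mul_sum]
  rw [sum_comm, sum_congr rfl fun i _ => hmarginal i, sum_const, card_univ, Fintype.card_fin,
    nsmul_eq_mul]

end ExpectedCount

section Survival

variable {ℓ n : ℕ} {P : Fin n → Fin ℓ → Bool} {f : (Fin ℓ → Bool) → ℝ} {H : Fin ℓ → Option Bool}

noncomputable def crossoverMatchProb (P : Fin n → Fin ℓ → Bool) (f : (Fin ℓ → Bool) → ℝ)
    (H : Fin ℓ → Option Bool) (c : Option (Fin (ℓ - 1))) : ℝ :=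
  ∑ j₁, ∑ j₂, selProb P f j₁ * selProb P f j₂ *
    if SchemaMatches (crossover (P j₁) (P j₂) c) H then 1 else 0

noncomputable def crossoverSurvival (P : Fin n → Fin ℓ → Bool) (f : (Fin ℓ → Bool) → ℝ)
    (p_c : ℝ) (H : Fin ℓ → Option Bool) : ℝ :=
  ∑ c, crossWeight ℓ p_c c * crossoverMatchProb P f H c

lemma crossoverMatchProb_nonneg (hf : ∀ j, 0 < f (P j)) (c : Option (Fin (ℓ - 1))) :
    0 ≤ crossoverMatchProb P f H c := by
  refine sum_nonneg fun j₁ _ => sum_nonneg fun j₂ _ => mul_nonneg ?_ (by split <;> norm_num)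
  exact mul_nonneg (selProb_nonneg hf j₁) (selProb_nonneg hf j₂)

lemma pSel_le_crossoverMatchProb (hf : ∀ j, 0 < f (P j)) (hT : totalFit P f ≠ 0)
    (c : Option (Fin (ℓ - 1)))
    (hc : (∀ A B, SchemaMatches A H → SchemaMatches (crossover A B c) H) ∨
      (∀ A B, SchemaMatches B H → SchemaMatches (crossover A B c) H)) :
    pSel P f H ≤ crossoverMatchProb P f H c := by
  have hmono : ∀ g : Fin n → Fin n → Prop, [∀ j₁ j₂, Decidable (g j₁ j₂)] →
      (∀ j₁ j₂, g j₁ j₂ → SchemaMatches (crossover (P j₁) (P j₂) c) H) →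
      ∑ j₁, ∑ j₂, selProb P f j₁ * selProb P f j₂ * (if g j₁ j₂ then 1 else 0) ≤
        crossoverMatchProb P f H c := fun g _ hg =>
    sum_le_sum fun j₁ _ => sum_le_sum fun j₂ _ => mul_le_mul_of_nonneg_left
      (boole_le_boole (hg j₁ j₂)) (mul_nonneg (selProb_nonneg hf j₁) (selProb_nonneg hf j₂))
  rcases hc with hc | hc
  · convert hmono (fun j₁ _ => SchemaMatches (P j₁) H) fun _ _ h => hc _ _ h using 1
    simp only [mul_assoc, ← mul_sum, ← sum_mul, sum_selProb hT, one_mul, pSel_eq_sum_ite]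
  · convert hmono (fun _ j₂ => SchemaMatches (P j₂) H) fun _ _ h => hc _ _ h using 1
    simp only [mul_assoc, ← mul_sum, ← sum_mul, sum_selProb hT, one_mul, pSel_eq_sum_ite]

variable {p_c p_m : ℝ}

lemma pSel_le_crossoverMatchProb_some (hf : ∀ j, 0 < f (P j)) (hT : totalFit P f ≠ 0)
    (hfix : (fixedPos H).Nonempty) {k : Fin (ℓ - 1)}
    (hk : ¬ ((((fixedPos H).min' hfix : Fin ℓ) : ℕ) ≤ k ∧
      (k : ℕ) < (((fixedPos H).max' hfix : Fin ℓ) : ℕ))) :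
    pSel P f H ≤ crossoverMatchProb P f H (some k) := by
  refine pSel_le_crossoverMatchProb hf hT _ ?_
  by_cases hmax : (((fixedPos H).max' hfix : Fin ℓ) : ℕ) ≤ k
  · exact .inl fun _ _ hA => crossover_matches_of_max_le hfix hA hmax
  · exact .inr fun _ _ hB => crossover_matches_of_lt_min hfix hB (by omega)

lemma le_crossoverSurvival (hℓ : 2 ≤ ℓ) (hf : ∀ j, 0 < f (P j)) (hT : totalFit P f ≠ 0)
    (hpc : p_c ∈ Set.Icc (0 : ℝ) 1) (hfix : (fixedPos H).Nonempty) :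
    pSel P f H * (1 - p_c * defLength H hfix / ((ℓ : ℝ) - 1)) ≤ crossoverSurvival P f p_c H := by
  set lo := (((fixedPos H).min' hfix : Fin ℓ) : ℕ)
  set hi := (((fixedPos H).max' hfix : Fin ℓ) : ℕ)
  set safe := univ.filter fun k : Fin (ℓ - 1) => ¬ (lo ≤ k ∧ (k : ℕ) < hi)
  have hL : (0 : ℝ) < ℓ - 1 := by
    have : (2 : ℝ) ≤ ℓ := by exact_mod_cast hℓ
    linarith
  have hcard : (ℓ : ℝ) - 1 - defLength H hfix ≤ #safe := by
    have hsplit :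
        #(univ.filter fun k : Fin (ℓ - 1) => lo ≤ k ∧ (k : ℕ) < hi) + #safe = ℓ - 1 := by
      rw [card_filter_add_card_filter_not, card_univ, Fintype.card_fin]
    have hdisrupt := card_filter_mem_Ico_le (ℓ - 1) lo hi
    have hnat : ℓ - 1 ≤ defLength H hfix + #safe := by unfold defLength; omega
    have hcast : ((ℓ - 1 : ℕ) : ℝ) = ℓ - 1 := by
      push_cast [Nat.cast_sub (by omega : 1 ≤ ℓ)]
      ring
    have hreal : ((ℓ - 1 : ℕ) : ℝ) ≤ defLength H hfix + #safe := by exact_mod_cast hnat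
    linarith
  have hsafe : #safe * pSel P f H ≤ ∑ k, crossoverMatchProb P f H (some k) :=
    calc #safe * pSel P f H
        = ∑ k : Fin (ℓ - 1), if ¬ (lo ≤ k ∧ (k : ℕ) < hi) then pSel P f H else 0 := by
          rw [← sum_filter, sum_const, nsmul_eq_mul]
      _ ≤ _ := sum_le_sum fun k _ =>
          if hk : lo ≤ k ∧ (k : ℕ) < hi then
            (if_neg (not_not.2 hk)).trans_le (crossoverMatchProb_nonneg hf _)
          else (if_pos hk).trans_le (pSel_le_crossoverMatchProb_some hf hT hfix hk)
  have hpSel := pSel_nonneg hf H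
  calc pSel P f H * (1 - p_c * defLength H hfix / ((ℓ : ℝ) - 1))
      = (1 - p_c) * pSel P f H + p_c / (ℓ - 1) * ((ℓ - 1 - defLength H hfix) * pSel P f H) := by
        field_simp
        ring
    _ ≤ (1 - p_c) * crossoverMatchProb P f H none +
          p_c / (ℓ - 1) * ∑ k, crossoverMatchProb P f H (some k) := by
        gcongr
        · exact sub_nonneg.2 hpc.2
        · exact pSel_le_crossoverMatchProb hf hT none (.inl fun _ _ hA => hA)
        · exact div_nonneg hpc.1 hL.le
        · exact (mul_le_mul_of_nonneg_right hcard hpSel).trans hsafe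
    _ = crossoverSurvival P f p_c H := by
        simp only [crossoverSurvival, Fintype.sum_option, crossWeight, mul_sum]

lemma crossoverSurvival_mul_le_matchProb (hf : ∀ j, 0 < f (P j))
    (hpc : p_c ∈ Set.Icc (0 : ℝ) 1) (hpm : p_m ∈ Set.Icc (0 : ℝ) 1) :
    crossoverSurvival P f p_c H * (1 - p_m) ^ schemaOrder H ≤ matchProb P f p_c p_m H := by
  have hpoint : ∀ x : GAChoice ℓ n,
      selProb P f x.1 * selProb P f x.2.1 * crossWeight ℓ p_c x.2.2.1 * mutWeight p_m x.2.2.2 *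
          ((if SchemaMatches (crossover (P x.1) (P x.2.1) x.2.2.1) H then 1 else 0) *
            (if ∀ i ∈ fixedPos H, x.2.2.2 i = false then 1 else 0)) ≤
        gaWeight P f p_c p_m x * if SchemaMatches (gaOffspring P x) H then 1 else 0 := by
    intro x
    rw [← gaWeight_eq, ite_zero_mul_ite_zero, mul_one, gaOffspring_eq]
    exact mul_le_mul_of_nonneg_left (boole_le_boole fun h => mutate_matches h.1 h.2)
      (gaWeight_nonneg hf hpc hpm x)
  calc crossoverSurvival P f p_c H * (1 - p_m) ^ schemaOrder H
      = ∑ x : GAChoice ℓ n,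
          selProb P f x.1 * selProb P f x.2.1 * crossWeight ℓ p_c x.2.2.1 * mutWeight p_m x.2.2.2 *
            ((if SchemaMatches (crossover (P x.1) (P x.2.1) x.2.2.1) H then 1 else 0) *
              (if ∀ i ∈ fixedPos H, x.2.2.2 i = false then 1 else 0)) := by
        simp only [crossoverSurvival, crossoverMatchProb, mul_sum, sum_mul]
        rw [schemaOrder, ← sum_mutWeight_mul_avoids (fixedPos H) p_m, Fintype.sum_prod_type,
          sum_comm]
        refine sum_congr rfl fun j₁ _ => ?_
        rw [Fintype.sum_prod_type, sum_comm]
        refine sum_congr rfl fun j₂ _ => ?_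
        rw [Fintype.sum_prod_type]
        simp only [mul_sum]
        exact sum_congr rfl fun c _ => sum_congr rfl fun e _ => by ring
    _ ≤ matchProb P f p_c p_m H := sum_le_sum fun x _ => hpoint x

end Survival

theorem schema_theorem_general {ℓ n : ℕ} (hℓ : 2 ≤ ℓ) (hn : 0 < n)
    (P : Fin n → Fin ℓ → Bool) (f : (Fin ℓ → Bool) → ℝ)
    (hf : ∀ j : Fin n, 0 < f (P j))
    (p_c p_m : ℝ) (hpc : p_c ∈ Set.Icc (0 : ℝ) 1) (hpm : p_m ∈ Set.Icc (0 : ℝ) 1)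
    (H : Fin ℓ → Option Bool) (hfix : (fixedPos H).Nonempty) :
    expCount P f p_c p_m H ≥
      schemaFit P f H / meanFit P f * (mCount P H : ℝ) *
        (1 - p_c * (defLength H hfix : ℝ) / ((ℓ : ℝ) - 1)) *
        (1 - p_m) ^ schemaOrder H := by
  have hT := (totalFit_pos hf hn).ne'
  rw [ge_iff_le, schemaFit_div_meanFit_mul_mCount, expCount_eq_mul_matchProb hℓ hf, mul_assoc,
    mul_assoc]
  refine mul_le_mul_of_nonneg_left ?_ n.cast_nonneg
  calc pSel P f H * ((1 - p_c * defLength H hfix / ((ℓ : ℝ) - 1)) * (1 - p_m) ^ schemaOrder H)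
      ≤ crossoverSurvival P f p_c H * (1 - p_m) ^ schemaOrder H := by
        rw [← mul_assoc]
        exact mul_le_mul_of_nonneg_right (le_crossoverSurvival hℓ hf hT hpc hfix)
          (pow_nonneg (sub_nonneg.2 hpm.2) _)
    _ ≤ matchProb P f p_c p_m H := crossoverSurvival_mul_le_matchProb hf hpc hpm

/-- **Schema Theorem (Holland).** For a genetic algorithm with fitness-proportional
selection, one-point crossover with probability `p_c` and independent per-bit mutation
with probability `p_m`, on bit strings of length `ℓ ≥ 2`, for every schema `H` with at
least one fixed position and at least one instance in the current population,
`E(m(H,t+1)) ≥ (f(H,t)/f̄(t)) · m(H,t) · (1 − p_c·d(H)/(ℓ−1)) · (1 − p_m)^{o(H)}`. -/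
theorem schema_theorem {ℓ n : ℕ} (hℓ : 2 ≤ ℓ) (hn : 0 < n)
    (P : Fin n → Fin ℓ → Bool) (f : (Fin ℓ → Bool) → ℝ)
    (hf : ∀ j : Fin n, 0 < f (P j))
    (p_c p_m : ℝ) (hpc : p_c ∈ Set.Icc (0 : ℝ) 1) (hpm : p_m ∈ Set.Icc (0 : ℝ) 1)
    (H : Fin ℓ → Option Bool) (hfix : (fixedPos H).Nonempty)
    (hm : 1 ≤ mCount P H) :
    expCount P f p_c p_m H ≥
      schemaFit P f H / meanFit P f * (mCount P H : ℝ) *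
        (1 - p_c * (defLength H hfix : ℝ) / ((ℓ : ℝ) - 1)) *
        (1 - p_m) ^ schemaOrder H :=
  schema_theorem_general hℓ hn P f hf p_c p_m hpc hpm H hfix
end

section
/- Properties of the inverse threshold function ᾱ. Let n ≥ 1 be a natural number, let k > 0 and 0 ≤ x ≤ n be real numbers, and define ᾱ(k,x,n) = ( n(k²+2x) + k·√(n²k² + 4nx(n−x)) ) / ( 2n(k²+n) ). Then x/n ≤ ᾱ(k,x,n) ≤ 1, and for every real a with ᾱ(k,x,n) ≤ a ≤ 1, one has n·a − k·√(n·a·(1−a)) ≥ x. -/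
/-- Poli's inverse threshold function
`ᾱ(k,x,n) = (n(k²+2x) + k·√(n²k² + 4nx(n−x))) / (2n(k²+n))`,
the larger root of the quadratic `(na − x)² = k²·n·a·(1−a)` in `a`. -/
noncomputable def alphaBar (k x : ℝ) (n : ℕ) : ℝ :=
  ((n : ℝ) * (k ^ 2 + 2 * x) +
      k * Real.sqrt ((n : ℝ) ^ 2 * k ^ 2 + 4 * n * x * (n - x))) /
    (2 * n * (k ^ 2 + n))

/-!
`ᾱ(k,x,n)` is the larger root of `q(a) = (na − x)² − k²·na(1 − a)`, whose leading coefficient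
`n(n + k²)` is positive. Since `q(x/n) = −k²x(1 − x/n) ≤ 0`, the point `x/n` lies below that root;
since `q(1) = (n − x)² ≥ 0` and `1` is right of the vertex, `1` lies above it; and beyond the
larger root `q ≥ 0`, which after taking square roots is the claimed inequality.
-/

open Real

/-- When the discriminant is negative this is the vertex `-b / (2a)`. -/
noncomputable def largerRoot (a b c : ℝ) : ℝ :=
  (-b + √(discrim a b c)) / (2 * a)

section largerRoot

variable {a b c : ℝ}

lemma sq_two_mul_add_eq_discrim_add (a b c x : ℝ) :
    (2 * a * x + b) ^ 2 = discrim a b c + 4 * a * (a * (x * x) + b * x + c) := by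
  rw [discrim]
  ring

lemma le_largerRoot_of_quadratic_nonpos (ha : 0 < a) {x : ℝ}
    (h : a * (x * x) + b * x + c ≤ 0) : x ≤ largerRoot a b c := by
  rw [largerRoot, le_div_iff₀ (by positivity)]
  have hsq : (2 * a * x + b) ^ 2 ≤ discrim a b c := by
    nlinarith [sq_two_mul_add_eq_discrim_add a b c x]
  linarith [le_abs_self (2 * a * x + b), abs_le_sqrt hsq]

lemma largerRoot_le_of_quadratic_nonneg (ha : 0 < a) {x : ℝ} (hvertex : -b ≤ 2 * a * x)
    (h : 0 ≤ a * (x * x) + b * x + c) : largerRoot a b c ≤ x := by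
  rw [largerRoot, div_le_iff₀ (by positivity)]
  have hsqrt : √(discrim a b c) ≤ 2 * a * x + b :=
    sqrt_le_iff.mpr ⟨by linarith, by nlinarith [sq_two_mul_add_eq_discrim_add a b c x]⟩
  linarith

lemma quadratic_nonneg_of_largerRoot_le (ha : 0 < a) {x : ℝ} (h : largerRoot a b c ≤ x) :
    0 ≤ a * (x * x) + b * x + c := by
  rw [largerRoot, div_le_iff₀ (by positivity)] at h
  have hdisc : discrim a b c ≤ (2 * a * x + b) ^ 2 := (sqrt_le_iff.mp (by linarith)).2
  nlinarith [sq_two_mul_add_eq_discrim_add a b c x]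

end largerRoot

lemma mul_sqrt_le_of_sq_mul_le {k y z : ℝ} (hk : 0 ≤ k) (hz : 0 ≤ z) (h : k ^ 2 * y ≤ z ^ 2) :
    k * √y ≤ z := by
  calc k * √y = √(k ^ 2 * y) := by rw [sqrt_mul (sq_nonneg k), sqrt_sq hk]
    _ ≤ √(z ^ 2) := sqrt_le_sqrt h
    _ = z := sqrt_sq hz

lemma alphaBar_eq_largerRoot (n : ℕ) {k : ℝ} (hk : 0 ≤ k) (x : ℝ) :
    alphaBar k x n = largerRoot (n * (k ^ 2 + n)) (-(n * (k ^ 2 + 2 * x))) (x ^ 2) := by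
  have hdisc : discrim (n * (k ^ 2 + n) : ℝ) (-(n * (k ^ 2 + 2 * x))) (x ^ 2) =
      k ^ 2 * ((n : ℝ) ^ 2 * k ^ 2 + 4 * n * x * (n - x)) := by
    rw [discrim]
    ring
  rw [alphaBar, largerRoot, hdisc, sqrt_mul (sq_nonneg k), sqrt_sq hk, neg_neg, mul_assoc 2]

/-- **Properties of the inverse threshold function `ᾱ`.** For `n ≥ 1`, `k > 0` and
`0 ≤ x ≤ n`, one has `x/n ≤ ᾱ(k,x,n) ≤ 1`, and for every `a` with
`ᾱ(k,x,n) ≤ a ≤ 1`, `n·a − k·√(n·a·(1−a)) ≥ x`. -/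
theorem alphaBar_properties (n : ℕ) (hn : 1 ≤ n) (k : ℝ) (hk : 0 < k)
    (x : ℝ) (hx0 : 0 ≤ x) (hxn : x ≤ n) :
    x / n ≤ alphaBar k x n ∧ alphaBar k x n ≤ 1 ∧
      ∀ a : ℝ, alphaBar k x n ≤ a → a ≤ 1 →
        x ≤ n * a - k * Real.sqrt (n * a * (1 - a)) := by
  have hN : (0 : ℝ) < n := by exact_mod_cast hn
  have hA : (0 : ℝ) < n * (k ^ 2 + n) := by positivity
  have hq : ∀ a : ℝ, n * (k ^ 2 + n) * (a * a) + -(n * (k ^ 2 + 2 * x)) * a + x ^ 2 =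
      (n * a - x) ^ 2 - k ^ 2 * (n * a * (1 - a)) := fun a => by ring
  rw [alphaBar_eq_largerRoot n hk.le]
  have hlower : x / n ≤ largerRoot (n * (k ^ 2 + n)) (-(n * (k ^ 2 + 2 * x))) (x ^ 2) := by
    refine le_largerRoot_of_quadratic_nonpos hA ?_
    rw [hq, mul_div_cancel₀ x hN.ne', sub_self]
    have hxn' : x / n ≤ 1 := (div_le_one hN).2 hxn
    nlinarith [mul_nonneg (sq_nonneg k) (mul_nonneg hx0 (sub_nonneg.2 hxn'))]
  refine ⟨hlower, largerRoot_le_of_quadratic_nonneg hA ?_ ?_, fun a ha _ => ?_⟩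
  · nlinarith
  · rw [hq]
    nlinarith [sq_nonneg ((n : ℝ) - x)]
  have hxa : x ≤ n * a := (div_le_iff₀' hN).mp (hlower.trans ha)
  have hqa := quadratic_nonneg_of_largerRoot_le hA ha
  rw [hq] at hqa
  have hsqrt : k * √(n * a * (1 - a)) ≤ n * a - x :=
    mul_sqrt_le_of_sq_mul_le hk.le (sub_nonneg.2 hxa) (by linarith)
  linarith
end

section
/- Conditional Probabilistic Schema Theorem (binomial core). Let n ≥ 1 be a natural number, k > 0 and 0 ≤ x ≤ n real numbers, and let ᾱ(k,x,n) = ( n(k²+2x) + k·√(n²k² + 4nx(n−x)) ) / ( 2n(k²+n) ). If X is binomially distributed with parameters n and a, where ᾱ(k,x,n) ≤ a ≤ 1, then P(X ≥ x) ≥ 1 − 1/k². -/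
/-!
`binomPMF n a` is the Bernstein basis evaluated at `a`, so the binomial law has total mass one
and variance `n a (1 - a)`. Since `ᾱ(k,x,n)` is the larger root of `(n a - x)² = k² n a (1 - a)`,
every `a ≥ ᾱ` satisfies `x ≤ n a` and `k² n a (1 - a) ≤ (n a - x)²`: the distance from `x` to the
mean is at least `k` standard deviations, and Chebyshev's inequality bounds the lower tail
`P(X < x)` by `1 / k²`.
-/

/-- The binomial probability mass function with parameters `n` and `a`:
`P(X = k) = C(n,k)·a^k·(1−a)^(n−k)`. -/
def binomPMF (n : ℕ) (a : ℝ) (k : ℕ) : ℝ :=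
  (n.choose k : ℝ) * a ^ k * (1 - a) ^ (n - k)

open Finset

theorem binomPMF_eq_eval_bernsteinPolynomial (n m : ℕ) (a : ℝ) :
    binomPMF n a m = (bernsteinPolynomial ℝ n m).eval a := by
  simp [binomPMF, bernsteinPolynomial]

theorem binomPMF_nonneg (n m : ℕ) {a : ℝ} (h0 : 0 ≤ a) (h1 : a ≤ 1) :
    0 ≤ binomPMF n a m :=
  mul_nonneg (by positivity) (pow_nonneg (sub_nonneg.2 h1) _)

theorem sum_binomPMF (n : ℕ) (a : ℝ) : ∑ m ∈ range (n + 1), binomPMF n a m = 1 := by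
  simpa [binomPMF_eq_eval_bernsteinPolynomial, Polynomial.eval_finsetSum] using
    congrArg (Polynomial.eval a) (bernsteinPolynomial.sum ℝ n)

theorem sum_sq_sub_mul_binomPMF (n : ℕ) (a : ℝ) :
    ∑ m ∈ range (n + 1), ((m : ℝ) - n * a) ^ 2 * binomPMF n a m = n * a * (1 - a) := by
  have h := congrArg (Polynomial.eval a) (bernsteinPolynomial.variance ℝ n)
  simp only [Polynomial.eval_finsetSum, Polynomial.eval_mul, Polynomial.eval_pow,
    Polynomial.eval_sub, Polynomial.eval_X, Polynomial.eval_natCast,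
    Polynomial.eval_one, nsmul_eq_mul, ← binomPMF_eq_eval_bernsteinPolynomial] at h
  rw [← h]
  exact sum_congr rfl fun m _ => by ring

theorem sum_filter_lt_le_of_sum_sq_sub_mul_le {ι : Type*} {s : Finset ι} {f w : ι → ℝ}
    (hw : ∀ i ∈ s, 0 ≤ w i) {x μ c : ℝ} (hxμ : x < μ)
    (hvar : ∑ i ∈ s, (f i - μ) ^ 2 * w i ≤ c * (μ - x) ^ 2) :
    ∑ i ∈ s with f i < x, w i ≤ c := by
  have hpos : 0 < (μ - x) ^ 2 := by nlinarith
  refine le_of_mul_le_mul_right ?_ hpos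
  calc (∑ i ∈ s with f i < x, w i) * (μ - x) ^ 2
      = ∑ i ∈ s with f i < x, (μ - x) ^ 2 * w i := by rw [sum_mul]; simp only [mul_comm]
    _ ≤ ∑ i ∈ s with f i < x, (f i - μ) ^ 2 * w i := by
        refine sum_le_sum fun i hi => ?_
        obtain ⟨his, hfi⟩ := mem_filter.1 hi
        exact mul_le_mul_of_nonneg_right (by nlinarith) (hw i his)
    _ ≤ ∑ i ∈ s, (f i - μ) ^ 2 * w i :=
        sum_le_sum_of_subset_of_nonneg (filter_subset _ _)
          fun i hi _ => mul_nonneg (sq_nonneg _) (hw i hi)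
    _ ≤ c * (μ - x) ^ 2 := hvar

section alphaBar

variable {n : ℕ} {k x a : ℝ}

theorem alphaBar_le_iff (hn : 0 < n) :
    alphaBar k x n ≤ a ↔
      n * (k ^ 2 + 2 * x) + k * √(n ^ 2 * k ^ 2 + 4 * n * x * (n - x)) ≤
        2 * n * (k ^ 2 + n) * a := by
  rw [alphaBar, div_le_iff₀ (by positivity)]
  ring_nf

theorem mul_le_sqrt_discrim (hx0 : 0 ≤ x) (hxn : x ≤ n) :
    n * k ≤ √(n ^ 2 * k ^ 2 + 4 * n * x * (n - x)) :=
  Real.le_sqrt_of_sq_le (by nlinarith [mul_nonneg hx0 (sub_nonneg.2 hxn)])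

theorem add_le_mul_of_alphaBar_le (hn : 0 < n) (hk : 0 ≤ k) (hx0 : 0 ≤ x) (hxn : x ≤ n)
    (ha : alphaBar k x n ≤ a) : k ^ 2 + x ≤ (k ^ 2 + n) * a := by
  have hroot := (alphaBar_le_iff hn).1 ha
  have hsqrt := mul_le_mul_of_nonneg_left (mul_le_sqrt_discrim (k := k) hx0 hxn) hk
  have hn' : (0 : ℝ) < n := by exact_mod_cast hn
  nlinarith

theorem sq_mul_variance_le_of_alphaBar_le (hn : 0 < n) (hk : 0 ≤ k) (hx0 : 0 ≤ x)
    (hxn : x ≤ n) (ha : alphaBar k x n ≤ a) :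
    k ^ 2 * (n * a * (1 - a)) ≤ (n * a - x) ^ 2 := by
  set s := √(n ^ 2 * k ^ 2 + 4 * n * x * (n - x))
  have hs2 : s ^ 2 = n ^ 2 * k ^ 2 + 4 * n * x * (n - x) :=
    Real.sq_sqrt (by nlinarith [mul_nonneg hx0 (sub_nonneg.2 hxn)])
  have hroot : k * s ≤ 2 * n * (k ^ 2 + n) * a - n * (k ^ 2 + 2 * x) := by
    linarith [(alphaBar_le_iff hn).1 ha]
  have hsq := mul_self_le_mul_self (mul_nonneg hk (Real.sqrt_nonneg _)) hroot
  have hn' : (0 : ℝ) < n := by exact_mod_cast hn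
  -- `4 n (n + k²) ((n a - x)² - k² n a (1 - a)) = (2 n (k² + n) a - n (k² + 2x))² - k² s²`
  have hscale : (0 : ℝ) < 4 * n * (n + k ^ 2) := by positivity
  refine le_of_mul_le_mul_left ?_ hscale
  nlinarith

end alphaBar

/-- **Conditional Probabilistic Schema Theorem (binomial core).** For `n ≥ 1`, `k > 0`
and `0 ≤ x ≤ n`, if `X` is binomially distributed with parameters `n` and `a`, where
`ᾱ(k,x,n) ≤ a ≤ 1`, then `P(X ≥ x) ≥ 1 − 1/k²`. -/
theorem conditional_probabilistic_schema_theorem (n : ℕ) (hn : 1 ≤ n)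
    (k : ℝ) (hk : 0 < k) (x : ℝ) (hx0 : 0 ≤ x) (hxn : x ≤ n)
    (a : ℝ) (ha₁ : alphaBar k x n ≤ a) (ha₂ : a ≤ 1) :
    1 - 1 / k ^ 2 ≤
      ∑ m ∈ (Finset.range (n + 1)).filter (fun m : ℕ => x ≤ (m : ℝ)),
        binomPMF n a m := by
  have hn' : 0 < n := hn
  have hmean := add_le_mul_of_alphaBar_le hn' hk.le hx0 hxn ha₁
  have hsplit : (∑ m ∈ range (n + 1) with x ≤ ((m : ℕ) : ℝ), binomPMF n a m) +
      ∑ m ∈ range (n + 1) with ((m : ℕ) : ℝ) < x, binomPMF n a m = 1 := by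
    simpa only [not_le, sum_binomPMF] using
      sum_filter_add_sum_filter_not (range (n + 1)) (fun m : ℕ => x ≤ (m : ℝ)) (binomPMF n a)
  suffices ∑ m ∈ range (n + 1) with ((m : ℕ) : ℝ) < x, binomPMF n a m ≤ 1 / k ^ 2 by linarith
  rcases ha₂.lt_or_eq with ha₂ | rfl
  · have hw : ∀ m ∈ range (n + 1), 0 ≤ binomPMF n a m := fun m _ =>
      binomPMF_nonneg n m (by nlinarith) ha₂.le
    have hxμ : x < n * a := by nlinarith [mul_pos (pow_pos hk 2) (sub_pos.2 ha₂)]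
    refine sum_filter_lt_le_of_sum_sq_sub_mul_le hw hxμ ?_
    rw [sum_sq_sub_mul_binomPMF, div_mul_eq_mul_div, one_mul, le_div_iff₀ (by positivity)]
    linarith [sq_mul_variance_le_of_alphaBar_le hn' hk.le hx0 hxn ha₁]
  · -- at `a = 1` the whole mass sits at `m = n`, outside the lower tail
    rw [sum_eq_zero fun m hm => ?_]
    · positivity
    rw [binomPMF_eq_eval_bernsteinPolynomial, bernsteinPolynomial.eval_at_1, if_neg]
    rintro rfl
    linarith [(mem_filter.1 hm).2]
end

section
/- Mutation survival probability. Let H : Fin ℓ → Option Bool be a schema and A : Fin ℓ → Bool a string matching H. Apply bitwise mutation to A: independently for each position i, flip the bit A i with probability p_m ∈ [0,1] and leave it unchanged with probability 1 − p_m. Then the probability that the mutated string still matches H is exactly (1 − p_m)^{o(H)}, where o(H) is the order of H; in particular it is at least (1 − p_m)^{o(H)}. -/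
/-- The probability that the string obtained from `A` by independent per-bit mutation
with probability `p_m` matches the schema `H`, computed as a sum over all mutation
masks. -/
def mutMatchProb {ℓ : ℕ} (p_m : ℝ) (A : Fin ℓ → Bool) (H : Fin ℓ → Option Bool) : ℝ :=
  ∑ e ∈ Finset.univ.filter (fun e : Fin ℓ → Bool => SchemaMatches (mutate A e) H),
    mutWeight p_m e

/-!
Since `A` already agrees with `H` on the fixed positions, the mutated string matches `H`
exactly when the mutation mask vanishes there. These masks form a box in `Bool^ℓ`, so the
weight sum factors coordinatewise: each fixed position contributes `1 - p_m` and each free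
one `p_m + (1 - p_m) = 1`.
-/

open Finset

theorem sum_piFinset_ite_singleton_prod {ι α R : Type*} [Fintype ι] [DecidableEq ι] [Fintype α]
    [CommSemiring R] (S : Finset ι) (a : α) (w : α → R) (hw : ∑ b, w b = 1) :
    ∑ e ∈ Fintype.piFinset (fun i => if i ∈ S then {a} else univ), ∏ i, w (e i) = w a ^ #S := by
  rw [← prod_univ_sum]
  simp_rw [apply_ite (fun t : Finset α => ∑ b ∈ t, w b), sum_singleton, hw]
  rw [Fintype.prod_ite_mem, prod_const]

section Schema

variable {ℓ : ℕ} {A : Fin ℓ → Bool} {H : Fin ℓ → Option Bool}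

theorem schemaMatches_mutate_iff (hA : SchemaMatches A H) (e : Fin ℓ → Bool) :
    SchemaMatches (mutate A e) H ↔ ∀ i ∈ fixedPos H, e i = false := by
  simp only [SchemaMatches, fixedPos, mem_filter, mem_univ, true_and, ne_eq,
    Option.ne_none_iff_exists', forall_exists_index]
  refine forall_congr' fun i => ⟨fun h b hb => ?_, fun h b hb => ?_⟩
  · simpa [mutate, hA i b hb] using congrArg (b ^^ ·) (h b hb)
  · simp [mutate, hA i b hb, h b hb]

theorem filter_schemaMatches_mutate_eq_piFinset (hA : SchemaMatches A H) :
    univ.filter (fun e => SchemaMatches (mutate A e) H) =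
      Fintype.piFinset (fun i => if i ∈ fixedPos H then {false} else univ) := by
  ext e
  simp only [mem_filter, mem_univ, true_and, schemaMatches_mutate_iff hA, Fintype.mem_piFinset]
  refine ⟨fun h i => ?_, fun h i hi => by simpa [hi] using h i⟩
  split_ifs with hi
  · exact mem_singleton.mpr (h i hi)
  · exact mem_univ _

theorem mutMatchProb_eq_pow (hA : SchemaMatches A H) (p_m : ℝ) :
    mutMatchProb p_m A H = (1 - p_m) ^ schemaOrder H := by
  rw [mutMatchProb, filter_schemaMatches_mutate_eq_piFinset hA]
  exact sum_piFinset_ite_singleton_prod (fixedPos H) false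
    (fun b => if b then p_m else 1 - p_m) (by simp)

end Schema

theorem mutation_survival_probability_general {ℓ : ℕ} (H : Fin ℓ → Option Bool)
    (A : Fin ℓ → Bool) (hA : SchemaMatches A H)
    (p_m : ℝ) :
    mutMatchProb p_m A H = (1 - p_m) ^ schemaOrder H ∧
      (1 - p_m) ^ schemaOrder H ≤ mutMatchProb p_m A H :=
  ⟨mutMatchProb_eq_pow hA p_m, (mutMatchProb_eq_pow hA p_m).ge⟩

/-- **Mutation survival probability.** If `A` matches the schema `H` and each bit of `A`
is flipped independently with probability `p_m ∈ [0,1]`, then the probability that the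
mutated string still matches `H` is exactly `(1 − p_m)^{o(H)}`; in particular it is at
least `(1 − p_m)^{o(H)}`. -/
theorem mutation_survival_probability {ℓ : ℕ} (H : Fin ℓ → Option Bool)
    (A : Fin ℓ → Bool) (hA : SchemaMatches A H)
    (p_m : ℝ) (hpm : p_m ∈ Set.Icc (0 : ℝ) 1) :
    mutMatchProb p_m A H = (1 - p_m) ^ schemaOrder H ∧
      (1 - p_m) ^ schemaOrder H ≤ mutMatchProb p_m A H :=
  mutation_survival_probability_general H A hA p_m
end
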